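/- arXiv:1611.01908 — 4 statements merged into one kernel-verified Lean document; each statement's English description precedes it below -/
import Mathlib

section
/- Let L > 0 and let φ : ℝ² → ℝ be nonnegative, L-periodic in its second variable (φ(ξ, x+L) = φ(ξ,x) for all ξ, x), nonincreasing in its first variable, and suppose that for every ξ ∈ ℝ there exists H₀(ξ) ∈ ℝ such that φ(ξ+x, x) > 0 for x < H₀(ξ) and φ(ξ+x, x) = 0 for x ≥ H₀(ξ). Then there exist real numbers H₁ ≤ H₂ such that φ(ξ, x) = 0 for all x ∈ ℝ whenever ξ ≥ H₂, and φ(ξ, x) > 0 for all x ∈ ℝ whenever ξ < H₁. -/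
/-- Lemma 3.1: a function `φ(ξ,x)` that is nonnegative, `L`-periodic in `x`,
nonincreasing in `ξ`, and has the diagonal supporting-point property, vanishes
identically for large `ξ` and is everywhere positive for `ξ` negative enough. -/
theorem supporting_levels_exist
    (L : ℝ) (hL : 0 < L) (φ : ℝ → ℝ → ℝ)
    (hnonneg : ∀ ξ x, 0 ≤ φ ξ x)
    (hper : ∀ ξ x, φ ξ (x + L) = φ ξ x)
    (hmono : ∀ x, Antitone fun ξ => φ ξ x)
    (hsupp : ∀ ξ : ℝ, ∃ H₀ : ℝ, (∀ x < H₀, 0 < φ (ξ + x) x) ∧ ∀ x ≥ H₀, φ (ξ + x) x = 0) :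
    ∃ H₁ H₂ : ℝ, H₁ ≤ H₂ ∧ (∀ ξ ≥ H₂, ∀ x, φ ξ x = 0) ∧ ∀ ξ < H₁, ∀ x, 0 < φ ξ x := by
  obtain ⟨H₀, hpos, hzero⟩ := hsupp 0
  have hperZ : ∀ ξ x (n : ℤ), φ ξ (x + n * L) = φ ξ x := by
    intro ξ x n
    have hp : Function.Periodic (φ ξ) L := fun y => hper ξ y
    simpa [mul_comm] using (hp.int_mul n) x
  refine ⟨H₀ - L, H₀ + L, by linarith, ?_, ?_⟩
  · intro ξ hξ x
    obtain ⟨n, hn, -⟩ := existsUnique_add_zsmul_mem_Ico hL x H₀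
    simp only [zsmul_eq_mul, Set.mem_Ico] at hn
    set y := x + n * L with hy
    have h1 : φ y y = 0 := by simpa using hzero y hn.1
    have h2 : φ ξ y ≤ φ y y := hmono y (by linarith [hn.2])
    have h3 : φ ξ x = φ ξ y := (hperZ ξ x n).symm
    have := hnonneg ξ y
    linarith
  · intro ξ hξ x
    obtain ⟨n, hn, -⟩ := existsUnique_add_zsmul_mem_Ico hL x (H₀ - L)
    simp only [zsmul_eq_mul, Set.mem_Ico] at hn
    set y := x + n * L with hy
    have h1 : 0 < φ y y := by simpa using hpos y (by linarith [hn.2])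
    have h2 : φ y y ≤ φ ξ y := hmono y (by linarith [hn.1])
    have h3 : φ ξ x = φ ξ y := (hperZ ξ x n).symm
    linarith
end

section
/- Let B > c > 0, and let T be a map from functions ℝ → ℝ to functions ℝ → ℝ that is order-preserving for the pointwise order, maps the zero function to the zero function, and is B-local: whenever φ₁ = φ₂ on [x−B, x+B], then T[φ₁](x) = T[φ₂](x). Let w : ℝ → ℝ and define w₀ = w, wₙ = max{w, T[wₙ₋₁]} pointwise. Let φ₀ : ℝ² → ℝ satisfy φ₀(ξ,x) = w(x) for all ξ ≤ −1 and φ₀(ξ,x) = 0 for all ξ ≥ 0. Define ã₀ = φ₀ and ãₙ₊₁(ξ,x) = max{φ₀(ξ,x), T[ãₙ(·+ξ+c−x, ·)](x)}. Then for every n ∈ ℕ and x ∈ ℝ: ãₙ(ξ,x) = wₙ(x) whenever ξ ≤ −n(B+c) − 1, and ãₙ(ξ,x) = 0 whenever ξ ≥ n(B−c). -/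
/-- Lemma 4.3(i), abstract form: for the recursion `ãₙ₊₁(ξ,x) = max{φ₀(ξ,x),
T[ãₙ(·+ξ+c−x, ·)](x)}` generated by an order-preserving, `B`-local operator `T`
mapping `0` to `0`, the iterates equal the auxiliary sequence `Wₙ` for
`ξ ≤ −n(B+c)−1` and vanish for `ξ ≥ n(B−c)`. -/
theorem truncated_recursion_tails
    (B c : ℝ) (hc : 0 < c) (hcB : c < B)
    (T : (ℝ → ℝ) → (ℝ → ℝ))
    (hmono : ∀ φ ψ : ℝ → ℝ, (∀ x, φ x ≤ ψ x) → ∀ x, T φ x ≤ T ψ x)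
    (hzero : ∀ x, T (fun _ => 0) x = 0)
    (hlocal : ∀ (φ ψ : ℝ → ℝ) (x : ℝ),
      (∀ y ∈ Set.Icc (x - B) (x + B), φ y = ψ y) → T φ x = T ψ x)
    (w : ℝ → ℝ) (W : ℕ → ℝ → ℝ)
    (hW0 : ∀ x, W 0 x = w x)
    (hWrec : ∀ n x, W (n + 1) x = max (w x) (T (W n) x))
    (φ₀ : ℝ → ℝ → ℝ)
    (hφ₀w : ∀ ξ x : ℝ, ξ ≤ -1 → φ₀ ξ x = w x)
    (hφ₀0 : ∀ ξ x : ℝ, 0 ≤ ξ → φ₀ ξ x = 0)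
    (a : ℕ → ℝ → ℝ → ℝ)
    (ha0 : ∀ ξ x, a 0 ξ x = φ₀ ξ x)
    (harec : ∀ n ξ x, a (n + 1) ξ x = max (φ₀ ξ x) (T (fun y => a n (y + ξ + c - x) y) x)) :
    ∀ (n : ℕ) (ξ x : ℝ),
      (ξ ≤ -((n : ℝ) * (B + c)) - 1 → a n ξ x = W n x) ∧
      ((n : ℝ) * (B - c) ≤ ξ → a n ξ x = 0) := by
  intro n
  induction n with
  | zero =>
    intro ξ x
    constructor
    · intro h
      have hξ : ξ ≤ -1 := by push_cast at h; linarith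
      rw [ha0, hφ₀w ξ x hξ, hW0]
    · intro h
      have hξ : 0 ≤ ξ := by push_cast at h; linarith
      rw [ha0, hφ₀0 ξ x hξ]
  | succ n ih =>
    intro ξ x
    have hBc : 0 < B - c := by linarith
    constructor
    · intro h
      push_cast at h
      have hξ : ξ ≤ -1 := by nlinarith [(Nat.cast_nonneg n : (0:ℝ) ≤ n)]
      rw [harec, hφ₀w ξ x hξ, hWrec]
      have : T (fun y => a n (y + ξ + c - x) y) x = T (W n) x := by
        apply hlocal
        intro y hy
        rcases hy with ⟨hy1, hy2⟩
        exact (ih (y + ξ + c - x) y).1 (by nlinarith)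
      rw [this]
    · intro h
      push_cast at h
      have hξ : (0:ℝ) ≤ ξ := by nlinarith [(Nat.cast_nonneg n : (0:ℝ) ≤ n)]
      rw [harec, hφ₀0 ξ x hξ]
      have : T (fun y => a n (y + ξ + c - x) y) x = T (fun _ => 0) x := by
        apply hlocal
        intro y hy
        rcases hy with ⟨hy1, hy2⟩
        exact (ih (y + ξ + c - x) y).2 (by nlinarith)
      rw [this, hzero]
      simp
end

section
/- Let B, c, c' satisfy 0 < c < B and 0 < c' < B, let m ≥ 1 be an integer, and let T be a map from functions ℝ → ℝ to functions ℝ → ℝ that is order-preserving for the pointwise order and B-local (φ₁ = φ₂ on [x−B, x+B] implies T[φ₁](x) = T[φ₂](x)). Let wₘ, wₘ₊₁ : ℝ → ℝ satisfy T[wₘ] = wₘ₊₁ and wₘ ≤ wₘ₊₁ pointwise. Let ãₘ₋₁ ≤ ãₘ and b̃ₘ₋₁ ≤ b̃ₘ (pointwise on ℝ²) be functions ℝ² → ℝ such that for all ξ, x: ãₘ(ξ,x) = T[ãₘ₋₁(·+ξ+c−x, ·)](x) and b̃ₘ(ξ,x) = T[b̃ₘ₋₁(·+ξ−c'−x, ·)](x);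 and ãₘ(ξ,x) = wₘ(x) whenever ξ ≤ −m(B+c)−1, b̃ₘ(ξ,x) = wₘ(x) whenever ξ ≥ m(B+c')+1. Fix A ≥ (1+m(B+c)+2B)/c and A' ≥ (1+m(B+c')+2B)/c'. For n ∈ ℕ define eₙ(x) = ãₘ(x−(n+A)c, x) for x ≥ 0 and eₙ(x) = b̃ₘ(x+(n+A')c', x) for x ≤ 0 (the two definitions agree at x = 0, both equal to wₘ(0)). Then eₙ₊₁(x) ≤ T[eₙ](x) for all x ∈ ℝ and n ∈ ℕ. -/
/-- Lemma 4.5, abstract form: the sequence `eₙ`, glued from the rightward and leftward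
truncated recursions at level `m`, is a subsolution of the recursion generated by the
order-preserving, `B`-local operator `T`: `eₙ₊₁ ≤ T[eₙ]`. -/
theorem glued_sequence_subsolution
    (B c c' : ℝ) (hc : 0 < c) (hcB : c < B) (hc' : 0 < c') (hc'B : c' < B)
    (m : ℕ) (hm : 1 ≤ m)
    (T : (ℝ → ℝ) → (ℝ → ℝ))
    (hmono : ∀ φ ψ : ℝ → ℝ, (∀ x, φ x ≤ ψ x) → ∀ x, T φ x ≤ T ψ x)
    (hlocal : ∀ (φ ψ : ℝ → ℝ) (x : ℝ),
      (∀ y ∈ Set.Icc (x - B) (x + B), φ y = ψ y) → T φ x = T ψ x)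
    (wm wm1 : ℝ → ℝ) (hTw : ∀ x, T wm x = wm1 x) (hwle : ∀ x, wm x ≤ wm1 x)
    (am' am bm' bm : ℝ → ℝ → ℝ)
    (ham : ∀ ξ x, am' ξ x ≤ am ξ x) (hbm : ∀ ξ x, bm' ξ x ≤ bm ξ x)
    (hamrec : ∀ ξ x, am ξ x = T (fun y => am' (y + ξ + c - x) y) x)
    (hbmrec : ∀ ξ x, bm ξ x = T (fun y => bm' (y + ξ - c' - x) y) x)
    (hamw : ∀ ξ x : ℝ, ξ ≤ -((m : ℝ) * (B + c)) - 1 → am ξ x = wm x)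
    (hbmw : ∀ ξ x : ℝ, (m : ℝ) * (B + c') + 1 ≤ ξ → bm ξ x = wm x)
    (A A' : ℝ)
    (hA : (1 + (m : ℝ) * (B + c) + 2 * B) / c ≤ A)
    (hA' : (1 + (m : ℝ) * (B + c') + 2 * B) / c' ≤ A')
    (e : ℕ → ℝ → ℝ)
    (he1 : ∀ (n : ℕ) (x : ℝ), 0 ≤ x → e n x = am (x - ((n : ℝ) + A) * c) x)
    (he2 : ∀ (n : ℕ) (x : ℝ), x ≤ 0 → e n x = bm (x + ((n : ℝ) + A') * c') x) :
    ∀ (n : ℕ) (x : ℝ), e (n + 1) x ≤ T (e n) x := by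
  intro n x
  have hBpos : 0 < B := lt_trans hc hcB
  have hAc : 1 + (m : ℝ) * (B + c) + 2 * B ≤ A * c := (div_le_iff₀ hc).mp hA
  have hA'c : 1 + (m : ℝ) * (B + c') + 2 * B ≤ A' * c' := (div_le_iff₀ hc').mp hA'
  have hnc : (0 : ℝ) ≤ (n : ℝ) * c := mul_nonneg n.cast_nonneg hc.le
  have hnc' : (0 : ℝ) ≤ (n : ℝ) * c' := mul_nonneg n.cast_nonneg hc'.le
  rcases le_total 0 x with hx | hx
  · -- x ≥ 0 : use the am recursion
    have hE : e (n + 1) x = T (fun y => am' (y - ((n : ℝ) + A) * c) y) x := by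
      rw [he1 (n + 1) x hx, hamrec]
      congr 1
      funext y
      congr 1
      push_cast
      ring
    have key : ∀ y ∈ Set.Icc (x - B) (x + B),
        am' (y - ((n : ℝ) + A) * c) y ≤ e n y := by
      intro y hy
      rcases le_total 0 y with hy0 | hy0
      · rw [he1 n y hy0]; exact ham _ _
      · have h1 : y - ((n : ℝ) + A) * c ≤ -((m : ℝ) * (B + c)) - 1 := by
          nlinarith [hAc, hnc, hBpos]
        have h2 : (m : ℝ) * (B + c') + 1 ≤ y + ((n : ℝ) + A') * c' := by
          have hxy : x - B ≤ y := hy.1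
          nlinarith [hA'c, hnc', hBpos]
        calc am' (y - ((n : ℝ) + A) * c) y
            ≤ am (y - ((n : ℝ) + A) * c) y := ham _ _
          _ = wm y := hamw _ _ h1
          _ = bm (y + ((n : ℝ) + A') * c') y := (hbmw _ _ h2).symm
          _ = e n y := (he2 n y hy0).symm
    rw [hE]
    calc T (fun y => am' (y - ((n : ℝ) + A) * c) y) x
        ≤ T (fun y => max (am' (y - ((n : ℝ) + A) * c) y) (e n y)) x :=
          hmono _ _ (fun y => le_max_left _ _) x
      _ = T (e n) x := hlocal _ _ x (fun y hy => max_eq_right (key y hy))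
  · -- x ≤ 0 : use the bm recursion
    have hE : e (n + 1) x = T (fun y => bm' (y + ((n : ℝ) + A') * c') y) x := by
      rw [he2 (n + 1) x hx, hbmrec]
      congr 1
      funext y
      congr 1
      push_cast
      ring
    have key : ∀ y ∈ Set.Icc (x - B) (x + B),
        bm' (y + ((n : ℝ) + A') * c') y ≤ e n y := by
      intro y hy
      rcases le_total 0 y with hy0 | hy0
      · have h2 : (m : ℝ) * (B + c') + 1 ≤ y + ((n : ℝ) + A') * c' := by
          nlinarith [hA'c, hnc', hBpos]
        have h1 : y - ((n : ℝ) + A) * c ≤ -((m : ℝ) * (B + c)) - 1 := by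
          have hxy : y ≤ x + B := hy.2
          nlinarith [hAc, hnc, hBpos]
        calc bm' (y + ((n : ℝ) + A') * c') y
            ≤ bm (y + ((n : ℝ) + A') * c') y := hbm _ _
          _ = wm y := hbmw _ _ h2
          _ = am (y - ((n : ℝ) + A) * c) y := (hamw _ _ h1).symm
          _ = e n y := (he1 n y hy0).symm
      · rw [he2 n y hy0]; exact hbm _ _
    rw [hE]
    calc T (fun y => bm' (y + ((n : ℝ) + A') * c') y) x
        ≤ T (fun y => max (bm' (y + ((n : ℝ) + A') * c') y) (e n y)) x :=
          hmono _ _ (fun y => le_max_left _ _) x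
      _ = T (e n) x := hlocal _ _ x (fun y hy => max_eq_right (key y hy))
end

section
/- Assume f satisfies the basic assumptions, and let K > 0 be such that f(t,x,u) ≤ Ku for all (t,x) ∈ ℝ² and u ∈ [0,M]. Set F(u) = (K/M)u(2M−u). Suppose c* > 0 and Φ ∈ C²([0,∞)) satisfy dΦ'' − c*Φ' + F(Φ) = 0 on (0,∞), 0 < Φ(x) < 2M for x ∈ (0,∞), Φ(0) = 0, μΦ'(0) = c*, and Φ(x) → 2M as x → ∞. Then every classical solution (u,h) of the half-line free boundary problem (1.10) with initial data u₀ ∈ H₊(h₀) satisfying u₀(x) < M for x < h₀ satisfies limsup as t → ∞ of h(t)/t ≤ c*. -/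
open Filter Topology Set

noncomputable section

/-- `u` solves `u_t = d u_xx + f(t,x,u)` classically at every point `(t,x)` of the set `s`:
the spatial function is twice differentiable there and the time derivative exists and
equals `d u_xx + f(t,x,u)`. -/
def SolvesPDE (d : ℝ) (f : ℝ → ℝ → ℝ → ℝ) (u : ℝ → ℝ → ℝ) (s : Set (ℝ × ℝ)) : Prop :=
  ∀ q ∈ s,
    DifferentiableAt ℝ (u q.1) q.2 ∧
    DifferentiableAt ℝ (deriv (u q.1)) q.2 ∧
    HasDerivAt (fun t => u t q.2)
      (d * deriv (deriv (u q.1)) q.2 + f q.1 q.2 (u q.1 q.2)) q.1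

/-- Basic assumptions on the reaction term `f(t,x,u)` (for `u ≥ 0`): continuity,
Hölder continuity of class `C^{α/2,α}` in `(t,x)` locally uniformly in `u`,
`C¹` in `u` uniformly in `(t,x)`, `f(t,x,0) = 0`, nonpositivity for large `u`,
and space-time periodicity. -/
structure BasicAssumptions (ω L : ℝ) (f : ℝ → ℝ → ℝ → ℝ) : Prop where
  cont : ContinuousOn (fun q : ℝ × ℝ × ℝ => f q.1 q.2.1 q.2.2) {q : ℝ × ℝ × ℝ | 0 ≤ q.2.2}
  holder : ∃ α ∈ Set.Ioo (0:ℝ) 1, ∀ R > 0, ∃ C > 0, ∀ t s x y u : ℝ,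
    0 ≤ u → u ≤ R → |f t x u - f s y u| ≤ C * (|t - s| ^ (α / 2) + |x - y| ^ α)
  c1 : ∃ fu : ℝ → ℝ → ℝ → ℝ,
    (∀ t x u : ℝ, 0 ≤ u → HasDerivWithinAt (fun w => f t x w) (fu t x u) (Set.Ici 0) u) ∧
    ∀ ε > 0, ∃ δ > 0, ∀ t x u v : ℝ, 0 ≤ u → 0 ≤ v → |u - v| ≤ δ →
      |fu t x u - fu t x v| ≤ ε
  zero : ∀ t x : ℝ, f t x 0 = 0
  neg_large : ∃ M > 0, ∀ t x u : ℝ, M ≤ u → f t x u ≤ 0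
  per_t : ∀ t x u : ℝ, 0 ≤ u → f (t + ω) x u = f t x u
  per_x : ∀ t x u : ℝ, 0 ≤ u → f t (x + L) u = f t x u

/-- The class `H₊(h₀)` of admissible initial data on `(-∞, h₀]`. -/
def memHplus (h₀ : ℝ) (φ : ℝ → ℝ) : Prop :=
  ContinuousOn φ (Set.Iic h₀) ∧ (∃ C, ∀ x ≤ h₀, |φ x| ≤ C) ∧ φ h₀ = 0 ∧ ∀ x < h₀, 0 < φ x

/-- A classical solution `(u, h)` of the half-line free boundary problem (1.10)
with Stefan constant `μ` and initial data `u₀ ∈ H₊(h₀)`, with `u` extended by `0`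
for `x > h(t)`. -/
structure IsHalfFBPSolution (d μ : ℝ) (f : ℝ → ℝ → ℝ → ℝ) (h₀ : ℝ) (u₀ : ℝ → ℝ)
    (u : ℝ → ℝ → ℝ) (h : ℝ → ℝ) : Prop where
  h_init : h 0 = h₀
  h_smooth : ContDiffOn ℝ 1 h (Set.Ici 0)
  bdd : ∃ C, ∀ t ≥ (0:ℝ), ∀ x, |u t x| ≤ C
  u_cont : ContinuousOn (fun q : ℝ × ℝ => u q.1 q.2) {q : ℝ × ℝ | 0 ≤ q.1 ∧ q.2 ≤ h q.1}
  pde : SolvesPDE d f u {q : ℝ × ℝ | 0 < q.1 ∧ q.2 < h q.1}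
  bc : ∀ t > (0:ℝ), u t (h t) = 0
  stefan : ∀ t > (0:ℝ),
    HasDerivAt h (-μ * derivWithin (u t) (Set.Iic (h t)) (h t)) t
  init : ∀ x ≤ h₀, u 0 x = u₀ x
  ext : ∀ t ≥ (0:ℝ), ∀ x : ℝ, h t < x → u t x = 0

/-!
Two comparison arguments at a first touching time. Since `f ≤ 0` above `M`, the function
`M + ε e^{(d+1)t - x}` is a strict supersolution, so `u ≤ M`. Next, for `1 < e` and
`e c* < c`, the function `e Φ(s₀ + c t - x)` is a strict supersolution: `Φ' ≥ 0` (the ODE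
gives `Φ'' < 0` at critical points, so `Φ`, which increases to `2M` at infinity, has no
interior minimum), and `f(t, x, e v) < e F(v)` for `0 < v < 2M` because `F` dominates `f`.
At a first time `t₀` at which either `u < e Φ(s₀ + c t - x)` or `h(t) < s₀ + c t` fails,
an interior touching contradicts the supersolution inequality, while `h(t₀) = s₀ + c t₀`
would force `c ≤ h'(t₀) = -μ u_x ≤ μ e Φ'(0) = e c*`. Hence `h(t) < s₀ + c t` for all
`t ≥ 0`, with `c` as close to `c*` as we like.
-/

theorem IsLocalMinOn.nonneg_mul_sub_of_hasDerivWithinAt {g : ℝ → ℝ} {s : Set ℝ} {a y m : ℝ}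
    (hmin : IsLocalMinOn g s a) (hg : HasDerivWithinAt g m s a) (hy : segment ℝ a y ⊆ s) :
    0 ≤ m * (y - a) := by
  simpa [mul_comm] using
    hmin.hasFDerivWithinAt_nonneg hg (sub_mem_posTangentConeAt_of_segment_subset hy)

theorem IsLocalMinOn.hasDerivWithinAt_Iic_nonpos {g : ℝ → ℝ} {a m : ℝ}
    (hmin : IsLocalMinOn g (Iic a) a) (hg : HasDerivWithinAt g m (Iic a) a) : m ≤ 0 := by
  have := hmin.nonneg_mul_sub_of_hasDerivWithinAt hg (y := a - 1)
    (by rw [segment_symm, segment_eq_Icc (by linarith)]; exact Icc_subset_Iic_self)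
  linarith

theorem IsLocalMin.deriv_deriv_nonneg {g : ℝ → ℝ} {a : ℝ} (hmin : IsLocalMin g a)
    (hg : ContinuousAt g a) : 0 ≤ deriv (deriv g) a := by
  -- if `g'' < 0`, the second derivative test makes `a` a local maximum too, so `g` is locally
  -- constant and `g'' = 0`
  by_contra! hneg
  have hmax : IsLocalMax g a := isLocalMax_of_deriv_deriv_neg hneg hmin.deriv_eq_zero hg
  have hconst : g =ᶠ[𝓝 a] fun _ => g a := by
    filter_upwards [hmin, hmax] with x h₁ h₂ using le_antisymm h₂ h₁
  have : deriv (deriv g) a = 0 := by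
    rw [hconst.deriv.deriv_eq]
    simp
  exact hneg.ne this

/-- The hypothesis `W' ≤ 0` covers the case where `v` is not differentiable within `Iic a`
at `a`, in which `derivWithin v (Iic a) a = 0`. -/
theorem le_derivWithin_Iic_of_le {v W : ℝ → ℝ} {a W' : ℝ}
    (hW : HasDerivWithinAt W W' (Iic a) a) (hW' : W' ≤ 0) (heq : v a = W a)
    (hle : ∀ x < a, v x ≤ W x) : W' ≤ derivWithin v (Iic a) a := by
  by_cases hv : DifferentiableWithinAt ℝ v (Iic a) a
  · have hmin : IsMinOn (fun x => W x - v x) (Iic a) a := fun x (hx : x ≤ a) => by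
      show W a - v a ≤ W x - v x
      rcases hx.lt_or_eq with hxa | rfl
      · linarith [hle x hxa]
      · exact le_rfl
    linarith [hmin.localize.hasDerivWithinAt_Iic_nonpos (hW.sub hv.hasDerivWithinAt)]
  · rwa [derivWithin_zero_of_not_differentiableWithinAt hv]

theorem IsClosed.isClosed_image_fst_of_forall_mem_Icc {S : Set (ℝ × ℝ)} (hS : IsClosed S)
    {a b : ℝ → ℝ} (ha : Continuous a) (hb : Continuous b)
    (hab : ∀ q ∈ S, q.2 ∈ Icc (a q.1) (b q.1)) : IsClosed (Prod.fst '' S) := by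
  refine isClosed_of_closure_subset fun t ht => ?_
  obtain ⟨A, hA⟩ := ((isCompact_Icc (a := t - 1) (b := t + 1)).image ha).bddBelow
  obtain ⟨B, hB⟩ := ((isCompact_Icc (a := t - 1) (b := t + 1)).image hb).bddAbove
  set C := S ∩ Icc (t - 1) (t + 1) ×ˢ Icc A B
  have hC : IsClosed (Prod.fst '' C) :=
    (((isCompact_Icc.prod isCompact_Icc).inter_left hS).image continuous_fst).isClosed
  have hsub : Ioo (t - 1) (t + 1) ∩ Prod.fst '' S ⊆ Prod.fst '' C := by
    rintro _ ⟨hI, q, hq, rfl⟩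
    have hI' : q.1 ∈ Icc (t - 1) (t + 1) := Ioo_subset_Icc_self hI
    exact ⟨q, ⟨hq, hI', (hA ⟨q.1, hI', rfl⟩).trans (hab q hq).1,
      (hab q hq).2.trans (hB ⟨q.1, hI', rfl⟩)⟩, rfl⟩
  have ht' : t ∈ closure (Prod.fst '' C) :=
    closure_mono hsub (isOpen_Ioo.inter_closure ⟨⟨by linarith, by linarith⟩, ht⟩)
  obtain ⟨q, hq, rfl⟩ := hC.closure_subset ht'
  exact ⟨q, hq.1, rfl⟩

theorem IsClosed.exists_forall_fst_le {S : Set (ℝ × ℝ)} (hS : IsClosed S)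
    {a b : ℝ → ℝ} (ha : Continuous a) (hb : Continuous b)
    (hab : ∀ q ∈ S, q.2 ∈ Icc (a q.1) (b q.1)) (h0 : ∀ q ∈ S, 0 ≤ q.1) (hne : S.Nonempty) :
    ∃ q ∈ S, ∀ q' ∈ S, q.1 ≤ q'.1 := by
  obtain ⟨⟨q, hq, hq₁⟩, hleast⟩ :=
    (hS.isClosed_image_fst_of_forall_mem_Icc ha hb hab).isLeast_csInf
      (hne.image _) ⟨0, by rintro _ ⟨q, hq, rfl⟩; exact h0 q hq⟩
  exact ⟨q, hq, fun q' hq' => hq₁ ▸ hleast ⟨q', hq', rfl⟩⟩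

theorem SolvesPDE.le_of_touch_above {d : ℝ} (hd : 0 ≤ d) {f : ℝ → ℝ → ℝ → ℝ}
    {u : ℝ → ℝ → ℝ} {s : Set (ℝ × ℝ)} (hu : SolvesPDE d f u s) {w : ℝ → ℝ → ℝ}
    {wx : ℝ → ℝ} {t₀ x₀ wt wxx : ℝ} (hs : ∀ᶠ x in 𝓝 x₀, (t₀, x) ∈ s)
    (hwt : HasDerivAt (fun t => w t x₀) wt t₀)
    (hwx : ∀ᶠ x in 𝓝 x₀, HasDerivAt (w t₀) (wx x) x) (hwxx : HasDerivAt wx wxx x₀)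
    (htouch : u t₀ x₀ = w t₀ x₀) (hleft : ∀ᶠ t in 𝓝[≤] t₀, u t x₀ ≤ w t x₀)
    (hspace : ∀ᶠ x in 𝓝 x₀, u t₀ x ≤ w t₀ x) :
    wt ≤ d * wxx + f t₀ x₀ (w t₀ x₀) := by
  obtain ⟨hux, huxx, hut⟩ := hu _ hs.self_of_nhds
  set uxx := deriv (deriv (u t₀)) x₀
  have htime : wt - (d * uxx + f t₀ x₀ (u t₀ x₀)) ≤ 0 := by
    refine IsLocalMinOn.hasDerivWithinAt_Iic_nonpos ?_ (hwt.sub hut).hasDerivWithinAt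
    filter_upwards [hleft] with t ht
    show w t₀ x₀ - u t₀ x₀ ≤ w t x₀ - u t x₀
    linarith
  have hmin : IsLocalMin (fun x => w t₀ x - u t₀ x) x₀ := by
    filter_upwards [hspace] with x hx
    linarith
  have hderiv : deriv (fun x => w t₀ x - u t₀ x) =ᶠ[𝓝 x₀] fun x => wx x - deriv (u t₀) x := by
    filter_upwards [hwx, hs] with x hx hxs
    exact (hx.sub (hu _ hxs).1.hasDerivAt).deriv
  have hspace' : 0 ≤ wxx - uxx := by
    have h2 : deriv (deriv fun x => w t₀ x - u t₀ x) x₀ = wxx - uxx := by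
      rw [hderiv.deriv_eq]
      exact (hwxx.sub huxx.hasDerivAt).deriv
    rw [← h2]
    exact hmin.deriv_deriv_nonneg (hwx.self_of_nhds.continuousAt.sub hux.continuousAt)
  rw [htouch] at htime
  nlinarith [mul_nonneg hd hspace']

theorem deriv_nonneg_of_tendsto_of_deriv_deriv_neg {Φ : ℝ → ℝ} {ℓ : ℝ}
    (hdiff : ∀ x, 0 < x → DifferentiableAt ℝ Φ x)
    (hcrit : ∀ x, 0 < x → deriv Φ x = 0 → deriv (deriv Φ) x < 0)
    (hlt : ∀ x, 0 < x → Φ x < ℓ) (hlim : Tendsto Φ atTop (𝓝 ℓ)) {b : ℝ} (hb : 0 < b) :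
    0 ≤ deriv Φ b := by
  by_contra! hneg
  obtain ⟨c, hΦc, hbc⟩ :=
    ((hlim.eventually (lt_mem_nhds (hlt b hb))).and (eventually_gt_atTop b)).exists
  obtain ⟨x, hx, hmin⟩ := isCompact_Icc.exists_isMinOn (nonempty_Icc.2 hbc.le)
    fun x hx => (hdiff x (hb.trans_le hx.1)).continuousAt.continuousWithinAt
  have hxb : x ≠ b := by
    rintro rfl
    have := hmin.localize.nonneg_mul_sub_of_hasDerivWithinAt
      (hdiff x hb).hasDerivAt.hasDerivWithinAt (segment_eq_Icc hbc.le).subset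
    nlinarith
  have hxc : x ≠ c := by
    rintro rfl
    exact (hmin ⟨le_rfl, hbc.le⟩).not_gt hΦc
  have hx₀ : 0 < x := hb.trans_le hx.1
  have hloc : IsLocalMin Φ x := hmin.isLocalMin
    (Icc_mem_nhds (hx.1.lt_of_ne' hxb) (hx.2.lt_of_ne hxc))
  exact (hcrit x hx₀ hloc.deriv_eq_zero).not_ge
    (hloc.deriv_deriv_nonneg (hdiff x hx₀).continuousAt)

theorem reaction_lt_logistic {f : ℝ → ℝ → ℝ → ℝ} {M K : ℝ} (hM : 0 < M) (hK : 0 < K)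
    (hfM : ∀ t x u : ℝ, M ≤ u → f t x u ≤ 0)
    (hfK : ∀ t x u : ℝ, 0 ≤ u → u ≤ M → f t x u ≤ K * u)
    {e v : ℝ} (he : 1 < e) (hv : 0 < v) (hv' : v < 2 * M) (t x : ℝ) :
    f t x (e * v) < e * (K / M * v * (2 * M - v)) := by
  have hF : 0 < e * (K / M * v * (2 * M - v)) := by
    have : 0 < 2 * M - v := by linarith
    positivity
  rcases le_or_gt (e * v) M with hle | hgt
  · have hvM : v < M := lt_of_lt_of_le (lt_mul_of_one_lt_left hv he) hle
    have hgap : K * (e * v) < e * (K / M * v * (2 * M - v)) := by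
      rw [div_mul_eq_mul_div, div_mul_eq_mul_div, mul_div_assoc', lt_div_iff₀ hM]
      nlinarith [mul_pos (mul_pos (mul_pos hK hv) (by linarith : (0 : ℝ) < e)) (sub_pos.2 hvM)]
    exact (hfK t x _ (by positivity) hle).trans_lt hgap
  · exact (hfM t x _ hgt.le).trans_lt hF

structure IsLogisticSemiWave (d μ c K M : ℝ) (Φ : ℝ → ℝ) : Prop where
  differentiableAt : ∀ x : ℝ, 0 < x → DifferentiableAt ℝ Φ x ∧ DifferentiableAt ℝ (deriv Φ) x
  ode : ∀ x : ℝ, 0 < x →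
    d * deriv (deriv Φ) x - c * deriv Φ x + K / M * Φ x * (2 * M - Φ x) = 0
  mem_Ioo : ∀ x : ℝ, 0 < x → 0 < Φ x ∧ Φ x < 2 * M
  zero : Φ 0 = 0
  differentiableWithinAt_zero : DifferentiableWithinAt ℝ Φ (Ici 0) 0
  stefan : μ * derivWithin Φ (Ici 0) 0 = c
  tendsto_atTop : Tendsto Φ atTop (𝓝 (2 * M))

namespace IsLogisticSemiWave

variable {d μ c K M : ℝ} {Φ : ℝ → ℝ}

theorem continuousOn (hΦ : IsLogisticSemiWave d μ c K M Φ) : ContinuousOn Φ (Ici 0) :=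
  fun x (hx : 0 ≤ x) => hx.eq_or_lt.elim
    (fun h0 => h0 ▸ hΦ.differentiableWithinAt_zero.continuousWithinAt)
    fun hpos => (hΦ.differentiableAt x hpos).1.continuousAt.continuousWithinAt

theorem deriv_nonneg (hΦ : IsLogisticSemiWave d μ c K M Φ) (hd : 0 < d) (hK : 0 < K)
    (hM : 0 < M) {x : ℝ} (hx : 0 < x) : 0 ≤ deriv Φ x := by
  refine deriv_nonneg_of_tendsto_of_deriv_deriv_neg
    (fun y hy => (hΦ.differentiableAt y hy).1) (fun y hy hy' => ?_)
    (fun y hy => (hΦ.mem_Ioo y hy).2) hΦ.tendsto_atTop hx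
  obtain ⟨h₁, h₂⟩ := hΦ.mem_Ioo y hy
  have hF : 0 < K / M * Φ y * (2 * M - Φ y) := by
    have : 0 < 2 * M - Φ y := by linarith
    positivity
  have := hΦ.ode y hy
  rw [hy', mul_zero, sub_zero] at this
  nlinarith

theorem strict_supersolution (hΦ : IsLogisticSemiWave d μ c K M Φ) (hd : 0 < d) (hK : 0 < K)
    (hM : 0 < M) {f : ℝ → ℝ → ℝ → ℝ} (hfM : ∀ t x u : ℝ, M ≤ u → f t x u ≤ 0)
    (hfK : ∀ t x u : ℝ, 0 ≤ u → u ≤ M → f t x u ≤ K * u) {e c' : ℝ} (he : 1 < e)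
    (hc : c ≤ c') {y : ℝ} (hy : 0 < y) (t x : ℝ) :
    d * (e * deriv (deriv Φ) y) + f t x (e * Φ y) < e * deriv Φ y * c' := by
  obtain ⟨h₁, h₂⟩ := hΦ.mem_Ioo y hy
  have hf := reaction_lt_logistic hM hK hfM hfK he h₁ h₂ t x
  have hmono : e * deriv Φ y * c ≤ e * deriv Φ y * c' :=
    mul_le_mul_of_nonneg_left hc (mul_nonneg (by linarith) (hΦ.deriv_nonneg hd hK hM hy))
  linear_combination hf + hmono + e * hΦ.ode y hy

theorem continuousAt_front (hΦ : IsLogisticSemiWave d μ c K M Φ) {e s₀ c' x t₀ : ℝ}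
    (hx : x < s₀ + c' * t₀) : ContinuousAt (fun t => e * Φ (s₀ + c' * t - x)) t₀ :=
  continuousAt_const.mul <| ContinuousAt.comp (g := Φ)
    (hΦ.differentiableAt _ (sub_pos.2 hx)).1.continuousAt (by fun_prop)

end IsLogisticSemiWave

section HalfFBP

variable {d μ : ℝ} {f : ℝ → ℝ → ℝ → ℝ} {h₀ : ℝ} {u₀ : ℝ → ℝ} {u : ℝ → ℝ → ℝ} {h : ℝ → ℝ}
  {cstar K M : ℝ} {Φ : ℝ → ℝ}

theorem IsHalfFBPSolution.eventually_le_of_forall_le_before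
    (hsol : IsHalfFBPSolution d μ f h₀ u₀ u h) {w : ℝ → ℝ → ℝ} {t₀ x : ℝ} (ht₀ : 0 < t₀)
    (hx : x < h t₀) (hw : ContinuousAt (fun t => w t x) t₀)
    (hbefore : ∀ t ∈ Ico 0 t₀, ∀ y ≤ h t, u t y ≤ w t y) :
    ∀ᶠ t in 𝓝[≤] t₀, u t x ≤ w t x := by
  have hlt : ∀ᶠ t in 𝓝[<] t₀, u t x ≤ w t x := by
    filter_upwards [Ioo_mem_nhdsLT ht₀, nhdsWithin_le_nhds
      ((hsol.stefan t₀ ht₀).continuousAt.eventually (lt_mem_nhds hx))] with t ht hxt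
    exact hbefore t ⟨ht.1.le, ht.2⟩ x hxt.le
  have hu : ContinuousAt (fun t => u t x) t₀ := (hsol.pde (t₀, x) ⟨ht₀, hx⟩).2.2.continuousAt
  have hat : u t₀ x ≤ w t₀ x :=
    le_of_tendsto_of_tendsto (hu.tendsto.mono_left nhdsWithin_le_nhds)
      (hw.tendsto.mono_left nhdsWithin_le_nhds) hlt
  rw [← Iio_insert, nhdsWithin_insert]
  exact ⟨hat, hlt⟩

theorem IsHalfFBPSolution.lt_of_forall_le_before (hd : 0 ≤ d)
    (hsol : IsHalfFBPSolution d μ f h₀ u₀ u h) {w : ℝ → ℝ → ℝ} {wx : ℝ → ℝ}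
    {t₀ x₀ wt wxx : ℝ} (ht₀ : 0 < t₀) (hx₀ : x₀ < h t₀)
    (hw : ∀ x < h t₀, ContinuousAt (fun t => w t x) t₀)
    (hwt : HasDerivAt (fun t => w t x₀) wt t₀)
    (hwx : ∀ᶠ x in 𝓝 x₀, HasDerivAt (w t₀) (wx x) x) (hwxx : HasDerivAt wx wxx x₀)
    (hsuper : d * wxx + f t₀ x₀ (w t₀ x₀) < wt)
    (hbefore : ∀ t ∈ Ico 0 t₀, ∀ y ≤ h t, u t y ≤ w t y) : u t₀ x₀ < w t₀ x₀ := by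
  have hle : ∀ x < h t₀, ∀ᶠ t in 𝓝[≤] t₀, u t x ≤ w t x := fun x hx =>
    hsol.eventually_le_of_forall_le_before ht₀ hx (hw x hx) hbefore
  have hIio : ∀ᶠ x in 𝓝 x₀, x < h t₀ := Iio_mem_nhds hx₀
  refine lt_of_le_of_ne ((hle x₀ hx₀).self_of_nhdsWithin self_mem_Iic) fun htouch =>
    hsuper.not_ge (hsol.pde.le_of_touch_above hd ?_ hwt hwx hwxx htouch (hle x₀ hx₀) ?_)
  · filter_upwards [hIio] with x hx using ⟨ht₀, hx⟩
  · filter_upwards [hIio] with x hx using (hle x hx).self_of_nhdsWithin self_mem_Iic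

theorem IsHalfFBPSolution.isClosed_domain (hsol : IsHalfFBPSolution d μ f h₀ u₀ u h) :
    IsClosed {q : ℝ × ℝ | 0 ≤ q.1 ∧ q.2 ≤ h q.1} :=
  (isClosed_le continuous_const continuous_fst).isClosed_le continuousOn_snd
    (hsol.h_smooth.continuousOn.comp continuousOn_fst fun _ hq => hq)

theorem IsHalfFBPSolution.exists_first_touch (hsol : IsHalfFBPSolution d μ f h₀ u₀ u h)
    {w : ℝ → ℝ → ℝ}
    (hw : ContinuousOn (fun q : ℝ × ℝ => w q.1 q.2) {q : ℝ × ℝ | 0 ≤ q.1 ∧ q.2 ≤ h q.1})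
    {a : ℝ → ℝ} (ha : Continuous a) (hbound : ∀ t ≥ 0, ∀ x ≤ h t, w t x ≤ u t x → a t ≤ x)
    (hne : ∃ t ≥ 0, ∃ x ≤ h t, w t x ≤ u t x) :
    ∃ t₀ ≥ 0, ∃ x₀ ≤ h t₀, w t₀ x₀ ≤ u t₀ x₀ ∧ ∀ t ∈ Ico 0 t₀, ∀ x ≤ h t, u t x < w t x := by
  obtain ⟨t₁, ht₁, x₁, hx₁, h₁⟩ := hne
  obtain ⟨⟨t₀, x₀⟩, ⟨⟨ht₀, hx₀⟩, hwu⟩, hfirst⟩ :=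
    (hsol.isClosed_domain.isClosed_le hw hsol.u_cont).exists_forall_fst_le ha
      (hsol.h_smooth.continuousOn.comp_continuous (by fun_prop) fun t => le_max_right t 0)
      (fun q hq => ⟨hbound _ hq.1.1 _ hq.1.2 hq.2,
        by simpa [Function.comp, max_eq_left hq.1.1] using hq.1.2⟩)
      (fun q hq => hq.1.1) ⟨(t₁, x₁), ⟨ht₁, hx₁⟩, h₁⟩
  exact ⟨t₀, ht₀, x₀, hx₀, hwu, fun t ht x hx =>
    not_le.1 fun h' => (hfirst (t, x) ⟨⟨ht.1, hx⟩, h'⟩).not_gt ht.2⟩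

theorem IsHalfFBPSolution.lt_add_mul_exp (hd : 0 < d) (hsol : IsHalfFBPSolution d μ f h₀ u₀ u h)
    {M : ℝ} (hM : 0 ≤ M) (hfM : ∀ t x u : ℝ, M ≤ u → f t x u ≤ 0)
    (hinit : ∀ x ≤ h 0, u 0 x ≤ M) {ε : ℝ} (hε : 0 < ε) :
    ∀ t ≥ 0, ∀ x ≤ h t, u t x < M + ε * Real.exp ((d + 1) * t - x) := by
  have hwM : ∀ t x, M < M + ε * Real.exp ((d + 1) * t - x) := fun t x =>
    lt_add_of_pos_right M (by positivity)
  obtain ⟨C, hC⟩ := hsol.bdd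
  have hbound : ∀ t ≥ 0, ∀ x ≤ h t, M + ε * Real.exp ((d + 1) * t - x) ≤ u t x →
      (d + 1) * t + 1 - (C - M) / ε ≤ x := fun t ht x _ hwu => by
    have hexp := Real.add_one_le_exp ((d + 1) * t - x)
    have hCu := (abs_le.1 (hC t ht x)).2
    have : (d + 1) * t - x + 1 ≤ (C - M) / ε := by
      rw [le_div_iff₀ hε]; nlinarith
    linarith
  by_contra! hne
  obtain ⟨t₀, ht₀, x₀, hx₀, hwu, hbefore⟩ := hsol.exists_first_touch (by fun_prop)
    (by fun_prop) hbound hne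
  have ht₀pos : 0 < t₀ := ht₀.lt_of_ne fun h0 => by
    subst h0; linarith [hinit x₀ hx₀, hwM 0 x₀]
  have hx₀lt : x₀ < h t₀ := hx₀.lt_of_ne fun hx => by
    rw [hx, hsol.bc t₀ ht₀pos] at hwu; linarith [hwM t₀ (h t₀)]
  set E := Real.exp ((d + 1) * t₀ - x₀)
  refine (hsol.lt_of_forall_le_before hd.le ht₀pos hx₀lt (wt := (d + 1) * (ε * E))
    (wx := fun x => -(ε * Real.exp ((d + 1) * t₀ - x))) (wxx := ε * E) (fun x _ => by fun_prop)
    ?_ ?_ ?_ ?_ fun t ht x hx => (hbefore t ht x hx).le).not_ge hwu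
  · exact (((((hasDerivAt_id' t₀).const_mul (d + 1)).sub_const x₀).exp.const_mul ε).const_add
      M).congr_deriv (by ring)
  · exact Eventually.of_forall fun x =>
      ((((hasDerivAt_id' x).const_sub ((d + 1) * t₀)).exp.const_mul ε).const_add M).congr_deriv
        (by ring)
  · exact (((hasDerivAt_id' x₀).const_sub ((d + 1) * t₀)).exp.const_mul ε).neg.congr_deriv
      (by ring)
  · have hf := hfM t₀ x₀ _ (hwM t₀ x₀).le
    nlinarith [mul_pos hε (Real.exp_pos ((d + 1) * t₀ - x₀))]

theorem IsHalfFBPSolution.le_of_init_le (hd : 0 < d) (hsol : IsHalfFBPSolution d μ f h₀ u₀ u h)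
    {M : ℝ} (hM : 0 ≤ M) (hfM : ∀ t x u : ℝ, M ≤ u → f t x u ≤ 0)
    (hinit : ∀ x ≤ h 0, u 0 x ≤ M) : ∀ t ≥ 0, ∀ x ≤ h t, u t x ≤ M := by
  intro t ht x hx
  refine le_of_forall_pos_lt_add fun δ hδ => ?_
  have hE := Real.exp_pos ((d + 1) * t - x)
  simpa [div_mul_cancel₀ δ hE.ne'] using
    hsol.lt_add_mul_exp hd hM hfM hinit (div_pos hδ hE) t ht x hx

theorem IsHalfFBPSolution.lt_semiwave_front_of_le_before (hμ : 0 < μ)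
    (hsol : IsHalfFBPSolution d μ f h₀ u₀ u h) (hΦ : IsLogisticSemiWave d μ cstar K M Φ)
    (hcstar : 0 < cstar) {e c s₀ t₀ : ℝ} (he : 0 ≤ e) (hc : e * cstar < c) (ht₀ : 0 < t₀)
    (hfront : ∀ t ∈ Ico 0 t₀, h t < s₀ + c * t)
    (hbefore : ∀ t ∈ Ico 0 t₀, ∀ x ≤ h t, u t x ≤ e * Φ (s₀ + c * t - x)) :
    h t₀ < s₀ + c * t₀ := by
  have hσ : HasDerivAt (fun t => s₀ + c * t) c t₀ :=
    ((hasDerivAt_id' t₀).const_mul c).const_add s₀ |>.congr_deriv (mul_one c)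
  have hle : h t₀ ≤ s₀ + c * t₀ :=
    le_of_tendsto_of_tendsto ((hsol.stefan t₀ ht₀).continuousAt.tendsto.mono_left
      nhdsWithin_le_nhds) (hσ.continuousAt.tendsto.mono_left nhdsWithin_le_nhds)
      (by filter_upwards [Ioo_mem_nhdsLT ht₀] with t ht using (hfront t ⟨ht.1.le, ht.2⟩).le)
  refine hle.lt_of_ne fun heq => ?_
  set ux := derivWithin (u t₀) (Iic (h t₀)) (h t₀)
  have hspeed : c ≤ -μ * ux := by
    have hmin : IsLocalMinOn (fun t => s₀ + c * t - h t) (Iic t₀) t₀ := by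
      filter_upwards [Ioc_mem_nhdsLE ht₀] with t ht
      rcases ht.2.lt_or_eq with htt | rfl
      · linarith [hfront t ⟨ht.1.le, htt⟩]
      · exact le_rfl
    linarith [hmin.hasDerivWithinAt_Iic_nonpos (hσ.sub (hsol.stefan t₀ ht₀)).hasDerivWithinAt]
  set Φ'₀ := derivWithin Φ (Ici 0) 0
  have hΦ'₀ : 0 < Φ'₀ := pos_of_mul_pos_right (hΦ.stefan ▸ hcstar) hμ.le
  have hW : HasDerivWithinAt (fun x => e * Φ (s₀ + c * t₀ - x)) (-(e * Φ'₀))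
      (Iic (h t₀)) (h t₀) := by
    have hΦ0 : HasDerivWithinAt Φ Φ'₀ (Ici 0) (s₀ + c * t₀ - h t₀) := by
      rw [heq, sub_self]
      exact hΦ.differentiableWithinAt_zero.hasDerivWithinAt
    refine ((hΦ0.comp (h t₀) ((hasDerivAt_id' (h t₀)).const_sub _).hasDerivWithinAt
      fun x (hx : x ≤ h t₀) => ?_).const_mul e).congr_deriv (by ring)
    show 0 ≤ s₀ + c * t₀ - x
    linarith
  have hux : -(e * Φ'₀) ≤ ux := by
    refine le_derivWithin_Iic_of_le hW (by nlinarith) ?_ fun x hx => ?_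
    · rw [hsol.bc t₀ ht₀, heq, sub_self, hΦ.zero, mul_zero]
    · exact (hsol.eventually_le_of_forall_le_before (w := fun t x => e * Φ (s₀ + c * t - x))
        ht₀ hx (hΦ.continuousAt_front (hx.trans_eq heq)) hbefore).self_of_nhdsWithin
        self_mem_Iic
  have : μ * (e * Φ'₀) = e * cstar := by rw [← hΦ.stefan]; ring
  nlinarith

theorem IsHalfFBPSolution.lt_semiwave_of_le_before (hd : 0 < d)
    (hsol : IsHalfFBPSolution d μ f h₀ u₀ u h) (hΦ : IsLogisticSemiWave d μ cstar K M Φ)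
    (hK : 0 < K) (hM : 0 < M) (hfM : ∀ t x u : ℝ, M ≤ u → f t x u ≤ 0)
    (hfK : ∀ t x u : ℝ, 0 ≤ u → u ≤ M → f t x u ≤ K * u) {e c s₀ t₀ x₀ : ℝ} (he : 1 < e)
    (hc : cstar ≤ c) (ht₀ : 0 < t₀) (hfront : h t₀ < s₀ + c * t₀)
    (hbefore : ∀ t ∈ Ico 0 t₀, ∀ x ≤ h t, u t x ≤ e * Φ (s₀ + c * t - x)) (hx₀ : x₀ ≤ h t₀) :
    u t₀ x₀ < e * Φ (s₀ + c * t₀ - x₀) := by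
  rcases hx₀.eq_or_lt with rfl | hx₀
  · rw [hsol.bc t₀ ht₀]
    exact mul_pos (by linarith) (hΦ.mem_Ioo _ (sub_pos.2 hfront)).1
  set y₀ := s₀ + c * t₀ - x₀
  have hy₀ : 0 < y₀ := by linarith
  obtain ⟨hΦ₁, hΦ₂⟩ := hΦ.differentiableAt y₀ hy₀
  refine hsol.lt_of_forall_le_before hd.le ht₀ hx₀ (w := fun t x => e * Φ (s₀ + c * t - x))
    (wt := e * deriv Φ y₀ * c) (wx := fun x => -(e * deriv Φ (s₀ + c * t₀ - x)))
    (wxx := e * deriv (deriv Φ) y₀) (fun x hx => hΦ.continuousAt_front (hx.trans hfront))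
    ?_ ?_ ?_ (hΦ.strict_supersolution hd hK hM hfM hfK he hc hy₀ t₀ x₀) hbefore
  · exact ((hΦ₁.hasDerivAt.comp t₀ ((((hasDerivAt_id' t₀).const_mul c).const_add s₀).sub_const
      x₀)).const_mul e).congr_deriv (by ring)
  · filter_upwards [Iio_mem_nhds (hx₀.trans hfront)] with x hx
    exact ((hΦ.differentiableAt _ (sub_pos.2 hx)).1.hasDerivAt.comp x
      ((hasDerivAt_id' x).const_sub _)).const_mul e |>.congr_deriv (by ring)
  · have := ((hΦ₂.hasDerivAt.comp x₀ ((hasDerivAt_id' x₀).const_sub (s₀ + c * t₀))).const_mul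
      e).neg
    exact this.congr_deriv (by ring)

theorem IsHalfFBPSolution.exists_first_semiwave_failure
    (hsol : IsHalfFBPSolution d μ f h₀ u₀ u h) (hΦ : ContinuousOn Φ (Ici 0)) {e c Y s₀ : ℝ}
    (hY : 0 ≤ Y)
    (hconf : ∀ t ≥ 0, ∀ x ≤ h t, Y ≤ s₀ + c * t - x → u t x < e * Φ (s₀ + c * t - x))
    (hne : ∃ t ≥ 0, s₀ + c * t ≤ h t) :
    ∃ t₀ ≥ 0, ∃ x₀ ≤ h t₀, (e * Φ (s₀ + c * t₀ - x₀) ≤ u t₀ x₀ ∨ s₀ + c * t₀ ≤ h t₀) ∧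
      (∀ t ∈ Ico 0 t₀, h t < s₀ + c * t) ∧
      ∀ t ∈ Ico 0 t₀, ∀ x ≤ h t, u t x ≤ e * Φ (s₀ + c * t - x) := by
  set D := {q ∈ {q : ℝ × ℝ | 0 ≤ q.1 ∧ q.2 ≤ h q.1} | q.2 ≤ s₀ + c * q.1}
  set S := {q ∈ D | e * Φ (s₀ + c * q.1 - q.2) ≤ u q.1 q.2} ∪ {q ∈ D | s₀ + c * q.1 ≤ q.2}
  have hD : IsClosed D := hsol.isClosed_domain.isClosed_le continuousOn_snd (by fun_prop)
  have hS : IsClosed S := by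
    refine (hD.isClosed_le ?_ (hsol.u_cont.mono fun q hq => hq.1)).union
      (hD.isClosed_le (by fun_prop) continuousOn_snd)
    exact continuousOn_const.mul (hΦ.comp (by fun_prop) fun q hq => sub_nonneg.2 hq.2)
  have hbound : ∀ q ∈ S, q.2 ∈ Icc (s₀ + c * q.1 - Y) (s₀ + c * q.1) := by
    rintro ⟨t, x⟩ (⟨⟨⟨ht, hxh⟩, hxσ⟩, hwu⟩ | ⟨⟨-, hxσ⟩, hσx⟩)
    · refine ⟨?_, hxσ⟩
      by_contra! hlt
      exact (hconf t ht x hxh (by linarith)).not_ge hwu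
    · exact ⟨by linarith, hxσ⟩
  obtain ⟨t₁, ht₁, hσ₁⟩ := hne
  obtain ⟨⟨t₀, x₀⟩, hq₀, hfirst⟩ := hS.exists_forall_fst_le (a := fun t => s₀ + c * t - Y)
    (b := fun t => s₀ + c * t) (by fun_prop) (by fun_prop) hbound
    (fun q hq => hq.elim (·.1.1.1) (·.1.1.1))
    ⟨(t₁, s₀ + c * t₁), Or.inr ⟨⟨⟨ht₁, hσ₁⟩, le_rfl⟩, le_rfl⟩⟩
  have hfront : ∀ t ∈ Ico 0 t₀, h t < s₀ + c * t := fun t ht => not_le.1 fun hσ =>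
    (hfirst (t, s₀ + c * t) (Or.inr ⟨⟨⟨ht.1, hσ⟩, le_rfl⟩, le_rfl⟩)).not_gt ht.2
  refine ⟨t₀, hq₀.elim (·.1.1.1) (·.1.1.1), x₀, hq₀.elim (·.1.1.2) (·.1.1.2), ?_, hfront,
    fun t ht x hx => le_of_not_ge fun hwu => (hfirst (t, x)
      (Or.inl ⟨⟨⟨ht.1, hx⟩, hx.trans (hfront t ht).le⟩, hwu⟩)).not_gt ht.2⟩
  rcases hq₀ with ⟨-, hwu⟩ | ⟨⟨⟨-, hx₀h⟩, -⟩, hσx⟩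
  · exact Or.inl hwu
  · exact Or.inr (hσx.trans hx₀h)

theorem IsHalfFBPSolution.lt_semiwave_front (hd : 0 < d) (hμ : 0 < μ)
    (hsol : IsHalfFBPSolution d μ f h₀ u₀ u h) (hΦ : IsLogisticSemiWave d μ cstar K M Φ)
    (hK : 0 < K) (hM : 0 < M) (hfM : ∀ t x u : ℝ, M ≤ u → f t x u ≤ 0)
    (hfK : ∀ t x u : ℝ, 0 ≤ u → u ≤ M → f t x u ≤ K * u)
    (huM : ∀ t ≥ 0, ∀ x ≤ h t, u t x ≤ M) (hcstar : 0 < cstar) {e c Y s₀ : ℝ} (he : 1 < e)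
    (hc : e * cstar < c) (hY : 0 < Y) (hΦY : ∀ y ≥ Y, M < Φ y) (hs₀ : h 0 + Y ≤ s₀) :
    ∀ t ≥ 0, h t < s₀ + c * t := by
  have hconf : ∀ t ≥ 0, ∀ x ≤ h t, Y ≤ s₀ + c * t - x → u t x < e * Φ (s₀ + c * t - x) :=
    fun t ht x hx hY' => by nlinarith [hΦY _ hY', huM t ht x hx]
  by_contra! hne
  obtain ⟨t₀, ht₀, x₀, hx₀, hfail, hfront, hbefore⟩ :=
    hsol.exists_first_semiwave_failure hΦ.continuousOn hY.le hconf hne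
  have ht₀pos : 0 < t₀ := ht₀.lt_of_ne fun h0 => by
    subst h0
    rcases hfail with hwu | hσ
    · exact (hconf 0 le_rfl x₀ hx₀ (by linarith)).not_ge hwu
    · linarith
  have hlt := hsol.lt_semiwave_front_of_le_before hμ hΦ hcstar (by linarith) hc ht₀pos hfront
    hbefore
  rcases hfail with hwu | hσ
  · exact (hsol.lt_semiwave_of_le_before hd hΦ hK hM hfM hfK he (by nlinarith) ht₀pos hlt
      hbefore hx₀).not_ge hwu
  · exact hσ.not_gt hlt

end HalfFBP

theorem half_line_boundary_speed_upper_bound_general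
    (d μ : ℝ) (hd : 0 < d) (hμ : 0 < μ)
    (f : ℝ → ℝ → ℝ → ℝ)
    (M : ℝ) (hM : 0 < M) (hfM : ∀ t x u : ℝ, M ≤ u → f t x u ≤ 0)
    (K : ℝ) (hK : 0 < K)
    (hfK : ∀ t x u : ℝ, 0 ≤ u → u ≤ M → f t x u ≤ K * u)
    (cstar : ℝ) (hcstar : 0 < cstar)
    (Φ : ℝ → ℝ)
    (hΦdiff : ∀ x : ℝ, 0 < x → DifferentiableAt ℝ Φ x ∧ DifferentiableAt ℝ (deriv Φ) x)
    (hODE : ∀ x : ℝ, 0 < x →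
      d * deriv (deriv Φ) x - cstar * deriv Φ x + K / M * Φ x * (2 * M - Φ x) = 0)
    (hrange : ∀ x : ℝ, 0 < x → 0 < Φ x ∧ Φ x < 2 * M)
    (hΦ0 : Φ 0 = 0)
    (hΦd0 : DifferentiableWithinAt ℝ Φ (Set.Ici 0) 0)
    (hΦ'0 : μ * derivWithin Φ (Set.Ici 0) 0 = cstar)
    (hΦinf : Tendsto Φ atTop (𝓝 (2 * M)))
    (h₀ : ℝ) (u₀ : ℝ → ℝ) (hu₀ : memHplus h₀ u₀)
    (hu₀M : ∀ x < h₀, u₀ x < M)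
    (u : ℝ → ℝ → ℝ) (h : ℝ → ℝ) (hsol : IsHalfFBPSolution d μ f h₀ u₀ u h) :
    ∀ c'' > cstar, ∃ T, ∀ t ≥ T, h t / t ≤ c'' := by
  intro c'' hc''
  have hΦ : IsLogisticSemiWave d μ cstar K M Φ := ⟨hΦdiff, hODE, hrange, hΦ0, hΦd0, hΦ'0, hΦinf⟩
  have huM : ∀ t ≥ 0, ∀ x ≤ h t, u t x ≤ M := by
    refine hsol.le_of_init_le hd hM.le hfM fun x hx => ?_
    rw [hsol.h_init] at hx
    rw [hsol.init x hx]
    rcases hx.lt_or_eq with hx | rfl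
    · exact (hu₀M x hx).le
    · exact hu₀.2.2.1 ▸ hM.le
  obtain ⟨c, hc, hcc''⟩ := exists_between hc''
  obtain ⟨c', hc', hc'c⟩ := exists_between hc
  obtain ⟨Y, hY⟩ := ((hΦinf.eventually (lt_mem_nhds (by linarith : M < 2 * M))).and
    (eventually_gt_atTop 0)).exists_forall_of_atTop
  have hfront := hsol.lt_semiwave_front hd hμ hΦ hK hM hfM hfK huM hcstar
    ((one_lt_div hcstar).2 hc') (by rwa [div_mul_cancel₀ _ hcstar.ne']) (hY Y le_rfl).2
    (fun y hy => (hY y hy).1) le_rfl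
  have hlim : Tendsto (fun t => (h 0 + Y) / t + c) atTop (𝓝 c) := by
    simpa using (tendsto_const_nhds.div_atTop tendsto_id).add_const c
  refine eventually_atTop.1 ?_
  filter_upwards [hlim.eventually (gt_mem_nhds hcc''), eventually_gt_atTop 0] with t ht htpos
  rw [div_add' _ _ _ htpos.ne', div_lt_iff₀ htpos] at ht
  rw [div_le_iff₀ htpos]
  linarith [hfront t htpos.le]

/-- Proposition 3.9 (comparison with a logistic semi-wave): the free boundary of the
half-line problem (1.10) moves at asymptotic speed at most `c*`, the speed of the
semi-wave `Φ` of the logistic nonlinearity `F(u) = (K/M) u (2M − u)` dominating `f`. -/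
theorem half_line_boundary_speed_upper_bound
    (d μ ω L : ℝ) (hd : 0 < d) (hμ : 0 < μ) (hω : 0 < ω) (hL : 0 < L)
    (f : ℝ → ℝ → ℝ → ℝ) (hf : BasicAssumptions ω L f)
    (M : ℝ) (hM : 0 < M) (hfM : ∀ t x u : ℝ, M ≤ u → f t x u ≤ 0)
    (K : ℝ) (hK : 0 < K)
    (hfK : ∀ t x u : ℝ, 0 ≤ u → u ≤ M → f t x u ≤ K * u)
    (cstar : ℝ) (hcstar : 0 < cstar)
    (Φ : ℝ → ℝ)
    (hΦcont : ContinuousOn Φ (Set.Ici 0))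
    (hΦdiff : ∀ x : ℝ, 0 < x → DifferentiableAt ℝ Φ x ∧ DifferentiableAt ℝ (deriv Φ) x)
    (hODE : ∀ x : ℝ, 0 < x →
      d * deriv (deriv Φ) x - cstar * deriv Φ x + K / M * Φ x * (2 * M - Φ x) = 0)
    (hrange : ∀ x : ℝ, 0 < x → 0 < Φ x ∧ Φ x < 2 * M)
    (hΦ0 : Φ 0 = 0)
    (hΦd0 : DifferentiableWithinAt ℝ Φ (Set.Ici 0) 0)
    (hΦ'0 : μ * derivWithin Φ (Set.Ici 0) 0 = cstar)
    (hΦinf : Tendsto Φ atTop (𝓝 (2 * M)))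
    (h₀ : ℝ) (u₀ : ℝ → ℝ) (hu₀ : memHplus h₀ u₀)
    (hu₀M : ∀ x < h₀, u₀ x < M)
    (u : ℝ → ℝ → ℝ) (h : ℝ → ℝ) (hsol : IsHalfFBPSolution d μ f h₀ u₀ u h) :
    ∀ c'' > cstar, ∃ T, ∀ t ≥ T, h t / t ≤ c'' :=
  half_line_boundary_speed_upper_bound_general d μ hd hμ f M hM hfM K hK hfK cstar hcstar Φ hΦdiff
    hODE hrange hΦ0 hΦd0 hΦ'0 hΦinf h₀ u₀ hu₀ hu₀M u h hsol
end
end
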